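/- arXiv:math/0605762 — 4 statements merged into one kernel-verified Lean document; each statement's English description precedes it below -/
import Mathlib

section
/- For every real n×n matrix A one has det(∑_{m=0}^∞ A^m/(m+1)!) = exp(tr(A)/2) · det(∑_{m=0}^∞ A^{2m}/(4^m (2m+1)!)). (This is the matrix identity (e^x−1)/x = e^{x/2}·sinh(x/2)/(x/2) at the level of determinants, used to compute the determinant of the bi-invariant metric on the isometry group.) -/
/-!
In `ℝ⟦X⟧` one has `X · sinhc · e^{X/2} = (e^{X/2} - e^{-X/2}) · e^{X/2} = e^X - 1`, where `sinhc`
is the series of `sinh(x/2)/(x/2)`; comparing coefficients gives `(e^x - 1)/x = e^{x/2} · sinhc`.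
Evaluating at `A` (Cauchy products of absolutely convergent series in a Banach algebra) turns this
into `∑ A^m/(m+1)! = exp(A/2) · Sh(A)`, so the determinant identity reduces to
`det (exp B) = e^{tr B}`. That follows from Jacobi's formula, which gives
`d/dt det (exp (t B)) = tr B · det (exp (t B))`.
-/

open scoped Nat

section PowerSeries

open PowerSeries

/-- The series of `sinh(x/2)/(x/2)`, written so that `X * sinhHalfDivSeries = e^{X/2} - e^{-X/2}`
is immediate. -/
noncomputable def sinhHalfDivSeries : PowerSeries ℝ :=
  mk fun l => ((2⁻¹ : ℝ) ^ (l + 1) - (-2⁻¹) ^ (l + 1)) / (l + 1)!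

theorem X_mul_sinhHalfDivSeries :
    X * sinhHalfDivSeries = rescale 2⁻¹ (exp ℝ) - rescale (-2⁻¹) (exp ℝ) := by
  ext (_ | l)
  · simp only [coeff_zero_X_mul, map_sub, coeff_rescale, coeff_exp]
    simp
  · simp only [coeff_succ_X_mul, sinhHalfDivSeries, coeff_mk, map_sub, coeff_rescale, coeff_exp,
      one_div, map_inv₀, map_natCast]
    ring

theorem coeff_sinhHalfDivSeries_mul_rescale_exp (m : ℕ) :
    coeff m (sinhHalfDivSeries * rescale 2⁻¹ (exp ℝ)) = ((m + 1)! : ℝ)⁻¹ := by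
  have hprod : X * (sinhHalfDivSeries * rescale 2⁻¹ (exp ℝ)) = exp ℝ - 1 := by
    rw [← mul_assoc, X_mul_sinhHalfDivSeries, sub_mul, exp_mul_exp_eq_exp_add,
      exp_mul_exp_eq_exp_add]
    norm_num [rescale_zero]
  rw [← coeff_succ_X_mul, hprod]
  simp [coeff_exp]

theorem coeff_sinhHalfDivSeries_two_mul (m : ℕ) :
    coeff (2 * m) sinhHalfDivSeries = ((4 ^ m * (2 * m + 1)! : ℝ))⁻¹ := by
  rw [sinhHalfDivSeries, coeff_mk, Odd.neg_pow (odd_two_mul_add_one m), sub_neg_eq_add, ← two_mul,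
    pow_succ, pow_mul, mul_inv, ← inv_pow]
  norm_num
  ring

theorem coeff_sinhHalfDivSeries_two_mul_add_one (m : ℕ) :
    coeff (2 * m + 1) sinhHalfDivSeries = 0 := by
  simp only [sinhHalfDivSeries, coeff_mk, Even.neg_pow (⟨m + 1, by ring⟩ : Even (2 * m + 1 + 1))]
  simp

theorem abs_coeff_sinhHalfDivSeries_le (l : ℕ) :
    |coeff l sinhHalfDivSeries| ≤ 2⁻¹ ^ l / l ! := by
  rw [sinhHalfDivSeries, coeff_mk, abs_div, Nat.abs_cast]
  calc |(2⁻¹ : ℝ) ^ (l + 1) - (-2⁻¹) ^ (l + 1)| / (l + 1)!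
      ≤ (|(2⁻¹ : ℝ) ^ (l + 1)| + |(-2⁻¹) ^ (l + 1)|) / (l + 1)! := by
        gcongr; exact abs_sub _ _
    _ = 2⁻¹ ^ l / (l + 1)! := by
        simp only [abs_pow, abs_neg, abs_inv, abs_two]
        ring
    _ ≤ 2⁻¹ ^ l / l ! := by gcongr; exact l.le_succ

section PowerSeriesEval

variable {𝔸 : Type*} [NormedRing 𝔸] [NormedAlgebra ℝ 𝔸]

theorem summable_norm_coeff_smul_pow_of_abs_le {f : PowerSeries ℝ} {r : ℝ} (hr : 0 ≤ r)
    (hf : ∀ k, |coeff k f| ≤ r ^ k / k !) (a : 𝔸) :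
    Summable fun k => ‖coeff k f • a ^ k‖ := by
  refine .of_nonneg_of_le (fun _ => norm_nonneg _) (fun k => ?_)
    (NormedSpace.norm_expSeries_summable' (𝕂 := ℝ) (r • a))
  rw [smul_pow, smul_smul, norm_smul, norm_smul, Real.norm_eq_abs, Real.norm_eq_abs,
    abs_of_nonneg (by positivity : 0 ≤ (k ! : ℝ)⁻¹ * r ^ k), inv_mul_eq_div]
  gcongr
  exact hf k

theorem tsum_coeff_mul_smul_pow [CompleteSpace 𝔸] {f g : PowerSeries ℝ} {a : 𝔸}
    (hf : Summable fun k => ‖coeff k f • a ^ k‖) (hg : Summable fun l => ‖coeff l g • a ^ l‖) :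
    ∑' m, coeff m (f * g) • a ^ m = (∑' k, coeff k f • a ^ k) * ∑' l, coeff l g • a ^ l := by
  rw [tsum_mul_tsum_eq_tsum_sum_antidiagonal_of_summable_norm hf hg]
  refine tsum_congr fun m => ?_
  rw [coeff_mul, Finset.sum_smul]
  refine Finset.sum_congr rfl fun kl hkl => ?_
  rw [smul_mul_smul_comm, ← pow_add, Finset.HasAntidiagonal.mem_antidiagonal.mp hkl]

theorem tsum_coeff_rescale_exp_smul_pow (c : ℝ) (a : 𝔸) :
    ∑' k, coeff k (rescale c (exp ℝ)) • a ^ k = NormedSpace.exp (c • a) := by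
  rw [NormedSpace.exp_eq_tsum ℝ]
  refine tsum_congr fun k => ?_
  simp [coeff_rescale, coeff_exp, smul_pow, smul_smul, mul_comm]

theorem tsum_coeff_sinhHalfDivSeries_smul_pow (a : 𝔸) :
    ∑' l, coeff l sinhHalfDivSeries • a ^ l
      = ∑' m : ℕ, ((4 ^ m * (2 * m + 1)! : ℝ))⁻¹ • a ^ (2 * m) := by
  have hsupp : (Function.support fun l => coeff l sinhHalfDivSeries • a ^ l)
      ⊆ Set.range (2 * ·) := by
    intro l hl
    obtain ⟨m, rfl | rfl⟩ := l.even_or_odd'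
    · exact ⟨m, rfl⟩
    · simp [coeff_sinhHalfDivSeries_two_mul_add_one] at hl
  rw [← (mul_right_injective₀ two_ne_zero).tsum_eq hsupp]
  simp only [coeff_sinhHalfDivSeries_two_mul]

theorem tsum_inv_factorial_succ_smul_pow [CompleteSpace 𝔸] (a : 𝔸) :
    ∑' m : ℕ, ((m + 1)! : ℝ)⁻¹ • a ^ m
      = NormedSpace.exp ((2 : ℝ)⁻¹ • a) *
          ∑' m : ℕ, ((4 ^ m * (2 * m + 1)! : ℝ))⁻¹ • a ^ (2 * m) := by
  have hexp : ∀ k, |coeff k (rescale (2⁻¹ : ℝ) (exp ℝ))| ≤ 2⁻¹ ^ k / k ! := fun k => by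
    simp [coeff_rescale, coeff_exp, abs_of_nonneg, div_eq_mul_inv]
  simp_rw [← coeff_sinhHalfDivSeries_mul_rescale_exp, mul_comm sinhHalfDivSeries,
    ← tsum_coeff_sinhHalfDivSeries_smul_pow, ← tsum_coeff_rescale_exp_smul_pow]
  exact tsum_coeff_mul_smul_pow (summable_norm_coeff_smul_pow_of_abs_le (by norm_num) hexp a)
    (summable_norm_coeff_smul_pow_of_abs_le (by norm_num) abs_coeff_sinhHalfDivSeries_le a)

end PowerSeriesEval

end PowerSeries

namespace Matrix

section Jacobi

variable {𝕜 : Type*} [NontriviallyNormedField 𝕜] {ι : Type*} [Fintype ι] [DecidableEq ι]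

variable (𝕜 ι) in
noncomputable def detRowContinuousMultilinear :
    ContinuousMultilinearMap 𝕜 (fun _ : ι => ι → 𝕜) 𝕜 where
  toMultilinearMap := (detRowAlternating : (ι → 𝕜) [⋀^ι]→ₗ[𝕜] 𝕜).toMultilinearMap
  cont := continuous_id.matrix_det

theorem hasDerivAt_det {M : 𝕜 → Matrix ι ι 𝕜} {M' : Matrix ι ι 𝕜} {t : 𝕜}
    (hM : ∀ i, HasDerivAt (fun s => M s i) (M' i) t) :
    HasDerivAt (fun s => (M s).det) (∑ i, ((M t).updateRow i (M' i)).det) t := by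
  refine (HasFDerivAt.multilinear_comp (detRowContinuousMultilinear 𝕜 ι)
    fun i => (hM i).hasFDerivAt).hasDerivAt.congr_deriv ?_
  simp only [_root_.sum_apply, ContinuousLinearMap.comp_apply,
    ContinuousLinearMap.toSpanSingleton_apply, one_smul,
    ContinuousMultilinearMap.toContinuousLinearMap_apply]
  rfl

end Jacobi

theorem sum_det_updateRow_mul {R ι : Type*} [CommRing R] [Fintype ι] [DecidableEq ι]
    (B M : Matrix ι ι R) : ∑ i, (M.updateRow i ((B * M) i)).det = B.trace * M.det := by
  have hrow : ∀ i, (B * M) i = ∑ j, B i j • M j := fun i => by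
    ext k; simp [mul_apply, Finset.sum_apply]
  simp [hrow, det_updateRow_sum, trace, Finset.sum_mul]

section Exp

-- Any algebra norm would do: `exp`, `tsum` and the statements below only see the topology.
open scoped Norms.Operator

open NormedSpace

variable {ι : Type*} [Fintype ι] [DecidableEq ι]

theorem hasDerivAt_det_exp_smul (B : Matrix ι ι ℝ) (t : ℝ) :
    HasDerivAt (fun s : ℝ => (exp (s • B)).det) (B.trace * (exp (t • B)).det) t := by
  have hrow (i : ι) : HasDerivAt (fun s : ℝ => exp (s • B) i) ((B * exp (t • B)) i) t :=
    (LinearMap.proj i : Matrix ι ι ℝ →ₗ[ℝ] ι → ℝ).toContinuousLinearMap.hasFDerivAt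
      |>.comp_hasDerivAt t (hasDerivAt_exp_smul_const' B t)
  simpa only [sum_det_updateRow_mul] using hasDerivAt_det hrow

theorem det_exp (B : Matrix ι ι ℝ) : (exp B).det = Real.exp B.trace := by
  have hconst (t : ℝ) :
      HasDerivAt (fun s : ℝ => (exp (s • B)).det * Real.exp (-(s * B.trace))) 0 t := by
    have hexp : HasDerivAt (fun s : ℝ => Real.exp (-(s * B.trace)))
        (Real.exp (-(t * B.trace)) * -B.trace) t :=
      (hasDerivAt_mul_const B.trace).neg.exp
    exact ((hasDerivAt_det_exp_smul B t).mul hexp).congr_deriv (by ring)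
  have hone := is_const_of_deriv_eq_zero (fun t => (hconst t).differentiableAt)
    (fun t => (hconst t).deriv) 1 0
  simp only [one_smul, one_mul, zero_smul, exp_zero, det_one, zero_mul, neg_zero,
    Real.exp_zero, mul_one] at hone
  rwa [Real.exp_neg, mul_inv_eq_one₀ (Real.exp_pos _).ne'] at hone

-- Restated here so that the sums are elaborated with the topology of `Matrix` itself.
theorem tsum_inv_factorial_succ_smul_pow (A : Matrix ι ι ℝ) :
    ∑' m : ℕ, ((m + 1)! : ℝ)⁻¹ • A ^ m
      = exp ((2 : ℝ)⁻¹ • A) * ∑' m : ℕ, ((4 ^ m * (2 * m + 1)! : ℝ))⁻¹ • A ^ (2 * m) :=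
  _root_.tsum_inv_factorial_succ_smul_pow A

end Exp

end Matrix

/-- The determinant identity `det((e^A - 1)/A) = e^{tr A / 2} · det(sinh(A/2)/(A/2))`
at the level of everywhere-convergent matrix power series. -/
theorem statement0 (n : ℕ) (A : Matrix (Fin n) (Fin n) ℝ) :
    (∑' m : ℕ, (((m + 1).factorial : ℝ))⁻¹ • A ^ m).det
      = Real.exp (A.trace / 2) *
        (∑' m : ℕ, ((4 ^ m * (2 * m + 1).factorial : ℝ))⁻¹ • A ^ (2 * m)).det := by
  rw [Matrix.tsum_inv_factorial_succ_smul_pow A, Matrix.det_mul, Matrix.det_exp, Matrix.trace_smul,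
    smul_eq_mul, inv_mul_eq_div]
end

section
/- For every k ∈ ℝ^N, the determinant of the metric G(k) = Y(k)^T γ Y(k) satisfies det G(k) = det(γ) · (det Sh(C(k)))², where Sh(M) = ∑_{m=0}^∞ M^{2m}/(4^m (2m+1)!). -/
open Matrix

/-- The matrix `C(k)` with entries `C(k)^A_B = ∑_D k^D C^A_{DB}`. -/
noncomputable def Cmat (N : ℕ) (Cs : Fin N → Fin N → Fin N → ℝ) (k : Fin N → ℝ) :
    Matrix (Fin N) (Fin N) ℝ :=
  Matrix.of fun A B => ∑ D, k D * Cs A D B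

/-- The matrix power series `Y(k) = ∑_{m=0}^∞ C(k)^m / (m+1)!`, i.e. `(e^{C(k)} - 1)/C(k)`. -/
noncomputable def Ymat (N : ℕ) (Cs : Fin N → Fin N → Fin N → ℝ) (k : Fin N → ℝ) :
    Matrix (Fin N) (Fin N) ℝ :=
  ∑' m : ℕ, (((m + 1).factorial : ℝ))⁻¹ • Cmat N Cs k ^ m

/-- The matrix power series `Sh(M) = ∑_{m=0}^∞ M^{2m}/(4^m (2m+1)!)`,
the matrix analogue of `sinh(x/2)/(x/2)`. -/
noncomputable def Sh {n : ℕ} (M : Matrix (Fin n) (Fin n) ℝ) : Matrix (Fin n) (Fin n) ℝ :=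
  ∑' m : ℕ, ((4 ^ m * (2 * m + 1).factorial : ℝ))⁻¹ • M ^ (2 * m)

/-!
Ad-invariance of the symmetric form `γ` makes `γ C` antisymmetric, i.e. `Cᵀ γ = γ (-C)`, hence
`Y(C)ᵀ γ = γ Y(-C)` and `det G = det γ · det (Y(-C) Y(C))`. As formal power series,
`X² Y(X) Y(-X) = (eˣ - 1)(1 - e⁻ˣ) = (e^{X/2} - e^{-X/2})² = X² Sh(X)²`, and `X²` can be cancelled.
Evaluating power series with coefficients bounded by `1/n!` at a matrix is multiplicative (Cauchy
product), so `Y(-C) Y(C) = Sh(C)²`.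
-/

open scoped Nat

namespace PowerSeries

noncomputable def expSubOneDivX : ℝ⟦X⟧ :=
  mk fun n => ((n + 1)! : ℝ)⁻¹

noncomputable def sinhHalfDivHalfX : ℝ⟦X⟧ :=
  mk fun n => if Even n then ((2 ^ n * (n + 1)! : ℝ))⁻¹ else 0

theorem X_mul_expSubOneDivX : X * expSubOneDivX = exp ℝ - 1 := by
  ext (_ | n)
  · simp
  · simp [coeff_succ_X_mul, expSubOneDivX, coeff_one]

theorem X_mul_sinhHalfDivHalfX :
    X * sinhHalfDivHalfX = rescale (1 / 2) (exp ℝ) - rescale (-1 / 2) (exp ℝ) := by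
  ext (_ | n)
  · simp [-coeff_zero_eq_constantCoeff, coeff_zero_X_mul]
  · rw [coeff_succ_X_mul, sinhHalfDivHalfX, coeff_mk]
    rcases Nat.even_or_odd n with hn | hn
    · simp [hn, neg_div, neg_pow, hn.add_one.neg_one_pow]
      ring
    · simp [Nat.not_even_iff_odd.mpr hn, neg_div, neg_pow, hn.add_one.neg_one_pow]

theorem expSubOneDivX_mul_rescale_neg_one :
    expSubOneDivX * rescale (-1) expSubOneDivX = sinhHalfDivHalfX ^ 2 := by
  set e : ℝ → ℝ⟦X⟧ := fun a => rescale a (exp ℝ)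
  have he : ∀ a b, e a * e b = e (a + b) := exp_mul_exp_eq_exp_add
  have he0 : e 0 = 1 := by simp [e]
  have h1 : e (1 / 2) * e (1 / 2) = e 1 := by rw [he]; norm_num
  have h2 : e (-1 / 2) * e (-1 / 2) = e (-1) := by rw [he]; norm_num
  have h3 : e (1 / 2) * e (-1 / 2) = 1 := by rw [he]; norm_num [he0]
  have h4 : e 1 * e (-1) = 1 := by rw [he]; norm_num [he0]
  refine mul_left_cancel₀ (pow_ne_zero 2 X_ne_zero) ?_
  calc X ^ 2 * (expSubOneDivX * rescale (-1) expSubOneDivX)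
      = -((X * expSubOneDivX) * rescale (-1) (X * expSubOneDivX)) := by
        rw [map_mul, rescale_neg_one_X]; ring
    _ = -((e 1 - 1) * (e (-1) - 1)) := by simp [e, X_mul_expSubOneDivX]
    _ = (e (1 / 2) - e (-1 / 2)) ^ 2 := by linear_combination -h4 - h1 - h2 + 2 * h3
    _ = X ^ 2 * sinhHalfDivHalfX ^ 2 := by rw [← mul_pow, X_mul_sinhHalfDivHalfX]

theorem abs_coeff_expSubOneDivX_le (n : ℕ) : |coeff n expSubOneDivX| ≤ (n ! : ℝ)⁻¹ := by
  rw [expSubOneDivX, coeff_mk, abs_of_nonneg (by positivity)]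
  gcongr
  exact n.le_succ

theorem abs_coeff_sinhHalfDivHalfX_le (n : ℕ) : |coeff n sinhHalfDivHalfX| ≤ (n ! : ℝ)⁻¹ := by
  rw [sinhHalfDivHalfX, coeff_mk]
  split_ifs
  · rw [abs_of_nonneg (by positivity)]
    gcongr
    calc (n ! : ℝ) ≤ (n + 1)! := by exact_mod_cast Nat.factorial_le n.le_succ
      _ ≤ 2 ^ n * (n + 1)! := le_mul_of_one_le_left (by positivity) (one_le_pow₀ one_le_two)
  · simp

theorem abs_coeff_rescale_neg_one (f : ℝ⟦X⟧) (n : ℕ) :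
    |coeff n (rescale (-1) f)| = |coeff n f| := by
  simp [abs_mul]

noncomputable def tsumEval {A : Type*} [Ring A] [Module ℝ A] [TopologicalSpace A]
    (f : ℝ⟦X⟧) (x : A) : A :=
  ∑' n, coeff n f • x ^ n

section NormedAlgebra

variable {A : Type*} [NormedRing A] [NormedAlgebra ℝ A] {f g : ℝ⟦X⟧}

theorem summable_norm_coeff_smul_pow (hf : ∀ n, |coeff n f| ≤ (n ! : ℝ)⁻¹) (x : A) :
    Summable fun n => ‖coeff n f • x ^ n‖ := by
  refine (NormedSpace.norm_expSeries_summable' (𝕂 := ℝ) x).of_nonneg_of_le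
    (fun _ => norm_nonneg _) fun n => ?_
  rw [norm_smul, norm_smul, Real.norm_eq_abs, Real.norm_of_nonneg (by positivity)]
  gcongr
  exact hf n

variable [CompleteSpace A]

theorem tsumEval_mul (hf : ∀ n, |coeff n f| ≤ (n ! : ℝ)⁻¹)
    (hg : ∀ n, |coeff n g| ≤ (n ! : ℝ)⁻¹) (x : A) :
    tsumEval (f * g) x = tsumEval f x * tsumEval g x := by
  rw [tsumEval, tsumEval, tsumEval, tsum_mul_tsum_eq_tsum_sum_antidiagonal_of_summable_norm
    (summable_norm_coeff_smul_pow hf x) (summable_norm_coeff_smul_pow hg x)]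
  refine tsum_congr fun n => ?_
  rw [coeff_mul, Finset.sum_smul]
  refine Finset.sum_congr rfl fun kl hkl => ?_
  rw [smul_mul_smul_comm, ← pow_add, Finset.HasAntidiagonal.mem_antidiagonal.mp hkl]

theorem _root_.SemiconjBy.tsumEval {a x y : A} (h : SemiconjBy a x y)
    (hf : ∀ n, |coeff n f| ≤ (n ! : ℝ)⁻¹) :
    SemiconjBy a (tsumEval f x) (tsumEval f y) := by
  rw [SemiconjBy, PowerSeries.tsumEval, PowerSeries.tsumEval,
    ← (summable_norm_coeff_smul_pow hf x).of_norm.tsum_mul_left,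
    ← (summable_norm_coeff_smul_pow hf y).of_norm.tsum_mul_right]
  refine tsum_congr fun n => ?_
  rw [mul_smul_comm, smul_mul_assoc, (h.pow_right n).eq]

end NormedAlgebra

theorem tsumEval_rescale_neg_one {A : Type*} [Ring A] [Algebra ℝ A] [TopologicalSpace A]
    (f : ℝ⟦X⟧) (x : A) : tsumEval (rescale (-1) f) x = tsumEval f (-x) := by
  refine tsum_congr fun n => ?_
  rw [coeff_rescale, ← neg_one_smul ℝ x, smul_pow, smul_smul, mul_comm]

theorem tsumEval_expSubOneDivX_neg_mul {A : Type*} [NormedRing A] [NormedAlgebra ℝ A]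
    [CompleteSpace A] (x : A) :
    tsumEval expSubOneDivX (-x) * tsumEval expSubOneDivX x = tsumEval sinhHalfDivHalfX x ^ 2 := by
  have hY := abs_coeff_expSubOneDivX_le
  have hS := abs_coeff_sinhHalfDivHalfX_le
  rw [← tsumEval_rescale_neg_one, ← tsumEval_mul (by simpa [abs_coeff_rescale_neg_one]) hY,
    mul_comm, expSubOneDivX_mul_rescale_neg_one, sq, tsumEval_mul hS hS, sq]

end PowerSeries

open PowerSeries

theorem Ymat_eq_tsumEval (N : ℕ) (Cs : Fin N → Fin N → Fin N → ℝ) (k : Fin N → ℝ) :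
    Ymat N Cs k = tsumEval expSubOneDivX (Cmat N Cs k) :=
  tsum_congr fun n => by rw [expSubOneDivX, coeff_mk]

theorem Sh_eq_tsumEval {n : ℕ} (M : Matrix (Fin n) (Fin n) ℝ) :
    Sh M = tsumEval sinhHalfDivHalfX M := by
  rw [tsumEval, ← (mul_right_injective₀ (two_ne_zero (α := ℕ))).tsum_eq]
  · refine tsum_congr fun m => ?_
    norm_num [sinhHalfDivHalfX, pow_mul]
  · intro i hi
    have hi : Even i := by
      by_contra hodd
      simp [sinhHalfDivHalfX, hodd] at hi
    obtain ⟨m, rfl⟩ := even_iff_two_dvd.mp hi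
    exact ⟨m, rfl⟩

theorem Matrix.transpose_tsumEval {m : Type*} [Fintype m] [DecidableEq m] (f : ℝ⟦X⟧)
    (M : Matrix m m ℝ) : (tsumEval f M)ᵀ = tsumEval f Mᵀ := by
  simp_rw [tsumEval, transpose_tsum, transpose_smul, transpose_pow]

theorem semiconjBy_neg_Cmat_transpose {N : ℕ} {Cs : Fin N → Fin N → Fin N → ℝ}
    (hanti : ∀ A B C, Cs A B C = - Cs A C B) {γ : Matrix (Fin N) (Fin N) ℝ} (hγ : γᵀ = γ)
    (had : ∀ A B C, (∑ D, γ A D * Cs D B C) = -(∑ D, γ B D * Cs D A C)) (k : Fin N → ℝ) :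
    SemiconjBy γ (-Cmat N Cs k) (Cmat N Cs k)ᵀ := by
  have hT : ∀ A E B, ∑ D, γ B D * Cs D E A = -∑ D, γ A D * Cs D E B := by
    intro A E B
    have hswap : ∑ D, γ E D * Cs D B A = -∑ D, γ E D * Cs D A B := by
      rw [← Finset.sum_neg_distrib]
      exact Finset.sum_congr rfl fun D _ => by rw [hanti D B A, mul_neg]
    rw [had B E A, hswap, had E A B, neg_neg]
  have hmul : ∀ A B, (γ * Cmat N Cs k) A B = ∑ E, k E * ∑ D, γ A D * Cs D E B := by
    intro A B
    simp only [mul_apply, Cmat, of_apply, Finset.mul_sum]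
    rw [Finset.sum_comm]
    exact Finset.sum_congr rfl fun E _ => Finset.sum_congr rfl fun D _ => by ring
  have hskew : (γ * Cmat N Cs k)ᵀ = -(γ * Cmat N Cs k) := by
    ext A B
    simp only [transpose_apply, Matrix.neg_apply, hmul, hT A, mul_neg, Finset.sum_neg_distrib]
  rw [SemiconjBy, mul_neg, ← hskew, transpose_mul, hγ]

attribute [local instance] Matrix.linftyOpNormedRing Matrix.linftyOpNormedAlgebra

theorem statement1_general (N : ℕ)
    (Cs : Fin N → Fin N → Fin N → ℝ)
    (hanti : ∀ A B C, Cs A B C = - Cs A C B)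
    (γ : Matrix (Fin N) (Fin N) ℝ) (hγ : γ.PosDef)
    (had : ∀ A B C, (∑ D, γ A D * Cs D B C) = -(∑ D, γ B D * Cs D A C))
    (k : Fin N → ℝ) :
    ((Ymat N Cs k)ᵀ * γ * Ymat N Cs k).det = γ.det * (Sh (Cmat N Cs k)).det ^ 2 := by
  have hγT : γᵀ = γ := isHermitian_iff_isSymm.mp hγ.isHermitian
  have hY : (Ymat N Cs k)ᵀ * γ = γ * tsumEval expSubOneDivX (-Cmat N Cs k) := by
    rw [Ymat_eq_tsumEval, transpose_tsumEval]
    exact ((semiconjBy_neg_Cmat_transpose hanti hγT had k).tsumEval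
      abs_coeff_expSubOneDivX_le).eq.symm
  rw [hY, mul_assoc, det_mul, Ymat_eq_tsumEval, Sh_eq_tsumEval, ← det_pow]
  -- `exact`, not `rw`: the lemma sees the matrix ring through the local normed instance.
  exact congrArg (γ.det * det ·) (tsumEval_expSubOneDivX_neg_mul _)

/-- For the bi-invariant metric `G(k) = Y(k)ᵀ γ Y(k)` on the isometry group one has
`det G(k) = det γ · (det Sh(C(k)))²`. -/
theorem statement1 (N : ℕ) (hN : 1 ≤ N)
    (Cs : Fin N → Fin N → Fin N → ℝ)
    (hanti : ∀ A B C, Cs A B C = - Cs A C B)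
    (γ : Matrix (Fin N) (Fin N) ℝ) (hγ : γ.PosDef)
    (had : ∀ A B C, (∑ D, γ A D * Cs D B C) = -(∑ D, γ B D * Cs D A C))
    (k : Fin N → ℝ) :
    ((Ymat N Cs k)ᵀ * γ * Ymat N Cs k).det = γ.det * (Sh (Cmat N Cs k)).det ^ 2 :=
  statement1_general N Cs hanti γ hγ had k
end

section
/- Under the stated hypotheses, the block matrices C_A = (C_a, C_i) satisfy the commutation relations of a Lie algebra with structure constants C^A_{BC}: namely [C_a, C_b] = ∑_i E^i_{ab} C_i, [C_i, C_a] = ∑_b D^b_{ia} C_b, and [C_i, C_k] = ∑_j F^j_{ik} C_j; equivalently, with C^i_{ab} = E^i_{ab}, C^a_{ib} = −C^a_{bi} = D^a_{ib}, C^i_{kl} = F^i_{kl} and all other components zero, one has [C_A, C_B] = ∑_C C^C_{AB} C_C. -/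
open Matrix

/-- The structure constants `C^A_{BC}` of the isometry algebra, with nonvanishing components
`C^i_{ab} = E^i_{ab}`, `C^a_{ib} = -C^a_{bi} = D^a_{ib}`, `C^i_{kl} = F^i_{kl}`. -/
def structConst (n p : ℕ) (E : Fin p → Fin n → Fin n → ℝ)
    (D : Fin n → Fin p → Fin n → ℝ) (F : Fin p → Fin p → Fin p → ℝ) :
    (Fin n ⊕ Fin p) → (Fin n ⊕ Fin p) → (Fin n ⊕ Fin p) → ℝ
  | Sum.inr i, Sum.inl a, Sum.inl b => E i a b
  | Sum.inl a, Sum.inr i, Sum.inl b => D a i b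
  | Sum.inl a, Sum.inl b, Sum.inr i => - (D a i b)
  | Sum.inr i, Sum.inr k, Sum.inr l => F i k l
  | _, _, _ => 0

/-- The block matrices `C_A = (C_a, C_i)`, where
`C_a = [[0, T̄_a],[T_a, 0]]` with `(T_a)^j_c = E^j_{ac}`, `(T̄_a)^b_i = -D^b_{ia}`, and
`C_i = diag(D_i, F_i)`. -/
def Cblock (n p : ℕ) (E : Fin p → Fin n → Fin n → ℝ)
    (D : Fin n → Fin p → Fin n → ℝ) (F : Fin p → Fin p → Fin p → ℝ) :
    (Fin n ⊕ Fin p) → Matrix (Fin n ⊕ Fin p) (Fin n ⊕ Fin p) ℝ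
  | Sum.inl a =>
      Matrix.fromBlocks 0 (Matrix.of fun b i => - (D b i a)) (Matrix.of fun j c => E j a c) 0
  | Sum.inr i =>
      Matrix.fromBlocks (Matrix.of fun a b => D a i b) 0 0 (Matrix.of fun j k => F j i k)

/-- The block matrices `C_A = (C_a, C_i)` satisfy the commutation relations
`[C_a, C_b] = ∑_i E^i_{ab} C_i`, `[C_i, C_a] = ∑_b D^b_{ia} C_b`,
`[C_i, C_k] = ∑_j F^j_{ik} C_j`; equivalently `[C_A, C_B] = ∑_C C^C_{AB} C_C`. -/
theorem statement2 (n p : ℕ) (hn : 1 ≤ n) (hp : 1 ≤ p)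
    (g : Matrix (Fin n) (Fin n) ℝ) (hg : g.PosDef)
    (β : Matrix (Fin p) (Fin p) ℝ) (hβ : β.PosDef)
    (E : Fin p → Fin n → Fin n → ℝ)
    (hE : ∀ i a b, E i a b = - E i b a)
    (D : Fin n → Fin p → Fin n → ℝ)
    (hD : ∀ a i b, D a i b = - ∑ k, ∑ c, β i k * E k c b * g⁻¹ c a)
    (F : Fin p → Fin p → Fin p → ℝ)
    (hF : ∀ j i k, F j i k = - F j k i)
    (hDD : ∀ i k a b, (∑ c, D a i c * D c k b) - (∑ c, D a k c * D c i b)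
      = ∑ j, F j i k * D a j b)
    (hFF : ∀ i k j l, (∑ m, F j i m * F m k l) - (∑ m, F j k m * F m i l)
      = ∑ m, F m i k * F j m l)
    (hIII : ∀ i k a b, (∑ c, (E i b c * D c k a - E i a c * D c k b))
      = ∑ j, E j a b * F i j k)
    (hBianchi : ∀ a b c d,
      (∑ i, ∑ k, β i k * (E i a b * E k c d + E i a c * E k d b + E i a d * E k b c)) = 0) :
    (∀ a b, Cblock n p E D F (Sum.inl a) * Cblock n p E D F (Sum.inl b)
        - Cblock n p E D F (Sum.inl b) * Cblock n p E D F (Sum.inl a)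
      = ∑ i, E i a b • Cblock n p E D F (Sum.inr i)) ∧
    (∀ i a, Cblock n p E D F (Sum.inr i) * Cblock n p E D F (Sum.inl a)
        - Cblock n p E D F (Sum.inl a) * Cblock n p E D F (Sum.inr i)
      = ∑ b, D b i a • Cblock n p E D F (Sum.inl b)) ∧
    (∀ i k, Cblock n p E D F (Sum.inr i) * Cblock n p E D F (Sum.inr k)
        - Cblock n p E D F (Sum.inr k) * Cblock n p E D F (Sum.inr i)
      = ∑ j, F j i k • Cblock n p E D F (Sum.inr j)) ∧
    (∀ A B, Cblock n p E D F A * Cblock n p E D F B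
        - Cblock n p E D F B * Cblock n p E D F A
      = ∑ C, structConst n p E D F C A B • Cblock n p E D F C) := by
  classical
  have hβsym : ∀ i k, β k i = β i k := by
    intro i k
    have h := congrFun (congrFun hβ.1 i) k
    simpa [Matrix.conjTranspose_apply] using h
  -- key Bianchi-type identity
  have key : ∀ (e a b d : Fin n),
      ∑ i : Fin p, ∑ k : Fin p,
        β i k * (E k e a * E i b d - E k e b * E i a d + E k e d * E i a b) = 0 := by
    intro e a b d
    have h1 : ∑ i : Fin p, ∑ k : Fin p,
          β i k * (E k e a * E i b d - E k e b * E i a d + E k e d * E i a b)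
        = ∑ i : Fin p, ∑ k : Fin p,
          β i k * (E i e a * E k b d + E i e b * E k d a + E i e d * E k a b) := by
      rw [Finset.sum_comm]
      refine Finset.sum_congr rfl fun i _ => Finset.sum_congr rfl fun k _ => ?_
      rw [hβsym i k, hE k a d]
      ring
    rw [h1, hBianchi e a b d]
  have key1 : ∀ (c a b d : Fin n),
      ∑ x : Fin p, -D c x a * E x b d - ∑ x : Fin p, -D c x b * E x a d
        = ∑ x : Fin p, E x a b * D c x d := by
    intro c a b d
    have t1 : ∑ x : Fin p, -D c x a * E x b d
        = ∑ x : Fin p, ∑ k : Fin p, ∑ e : Fin n,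
            β x k * E k e a * g⁻¹ e c * E x b d :=
      Finset.sum_congr rfl fun x _ => by
        rw [hD c x a]; simp only [neg_neg, Finset.sum_mul]
    have t2 : ∑ x : Fin p, -D c x b * E x a d
        = ∑ x : Fin p, ∑ k : Fin p, ∑ e : Fin n,
            β x k * E k e b * g⁻¹ e c * E x a d :=
      Finset.sum_congr rfl fun x _ => by
        rw [hD c x b]; simp only [neg_neg, Finset.sum_mul]
    have t3 : ∑ x : Fin p, E x a b * D c x d
        = ∑ x : Fin p, ∑ k : Fin p, ∑ e : Fin n,
            -(E x a b * (β x k * E k e d * g⁻¹ e c)) :=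
      Finset.sum_congr rfl fun x _ => by
        rw [hD c x d]; simp only [mul_neg, Finset.mul_sum, ← Finset.sum_neg_distrib]
    have main : ∑ x : Fin p, ∑ k : Fin p, ∑ e : Fin n,
        (β x k * E k e a * g⁻¹ e c * E x b d
          - β x k * E k e b * g⁻¹ e c * E x a d
          + E x a b * (β x k * E k e d * g⁻¹ e c)) = 0 := by
      calc ∑ x : Fin p, ∑ k : Fin p, ∑ e : Fin n,
            (β x k * E k e a * g⁻¹ e c * E x b d
              - β x k * E k e b * g⁻¹ e c * E x a d
              + E x a b * (β x k * E k e d * g⁻¹ e c))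
          = ∑ x : Fin p, ∑ e : Fin n, ∑ k : Fin p,
            (β x k * E k e a * g⁻¹ e c * E x b d
              - β x k * E k e b * g⁻¹ e c * E x a d
              + E x a b * (β x k * E k e d * g⁻¹ e c)) :=
            Finset.sum_congr rfl fun x _ => Finset.sum_comm
        _ = ∑ e : Fin n, ∑ x : Fin p, ∑ k : Fin p,
            (β x k * E k e a * g⁻¹ e c * E x b d
              - β x k * E k e b * g⁻¹ e c * E x a d
              + E x a b * (β x k * E k e d * g⁻¹ e c)) := Finset.sum_comm
        _ = ∑ e : Fin n, g⁻¹ e c * ∑ x : Fin p, ∑ k : Fin p,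
            β x k * (E k e a * E x b d - E k e b * E x a d + E k e d * E x a b) := by
            refine Finset.sum_congr rfl fun e _ => ?_
            rw [Finset.mul_sum]
            refine Finset.sum_congr rfl fun x _ => ?_
            rw [Finset.mul_sum]
            exact Finset.sum_congr rfl fun k _ => by ring
        _ = 0 := Finset.sum_eq_zero fun e _ => by rw [key e a b d, mul_zero]
    simp only [Finset.sum_sub_distrib, Finset.sum_add_distrib] at main
    rw [t1, t2, t3]
    simp only [Finset.sum_neg_distrib]
    linarith [main]
  have part1 : ∀ a b, Cblock n p E D F (Sum.inl a) * Cblock n p E D F (Sum.inl b)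
        - Cblock n p E D F (Sum.inl b) * Cblock n p E D F (Sum.inl a)
      = ∑ i, E i a b • Cblock n p E D F (Sum.inr i) := by
    intro a b
    ext A B
    cases A <;> cases B <;>
      simp only [Cblock, Matrix.sub_apply, Matrix.mul_apply, Matrix.sum_apply,
        Matrix.smul_apply, smul_eq_mul, Fintype.sum_sum_type,
        Matrix.fromBlocks_apply₁₁, Matrix.fromBlocks_apply₁₂,
        Matrix.fromBlocks_apply₂₁, Matrix.fromBlocks_apply₂₂,
        Matrix.of_apply, Matrix.zero_apply, zero_mul, mul_zero,
        Finset.sum_const_zero, add_zero, zero_add, sub_zero, zero_sub, sub_self]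
    · rename_i c d
      exact key1 c a b d
    · rename_i j l
      have h := hIII j l a b
      rw [Finset.sum_sub_distrib] at h
      simp only [mul_neg, Finset.sum_neg_distrib]
      linarith [h]
  have part2 : ∀ i a, Cblock n p E D F (Sum.inr i) * Cblock n p E D F (Sum.inl a)
        - Cblock n p E D F (Sum.inl a) * Cblock n p E D F (Sum.inr i)
      = ∑ b, D b i a • Cblock n p E D F (Sum.inl b) := by
    intro i a
    ext A B
    cases A <;> cases B <;>
      simp only [Cblock, Matrix.sub_apply, Matrix.mul_apply, Matrix.sum_apply,
        Matrix.smul_apply, smul_eq_mul, Fintype.sum_sum_type,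
        Matrix.fromBlocks_apply₁₁, Matrix.fromBlocks_apply₁₂,
        Matrix.fromBlocks_apply₂₁, Matrix.fromBlocks_apply₂₂,
        Matrix.of_apply, Matrix.zero_apply, zero_mul, mul_zero,
        Finset.sum_const_zero, add_zero, zero_add, sub_zero, zero_sub, sub_self]
    · rename_i b k
      have h := hDD k i b a
      have e1 : ∑ x : Fin n, D x i a * D b k x = ∑ x : Fin n, D b k x * D x i a :=
        Finset.sum_congr rfl fun x _ => mul_comm _ _
      have e2 : ∑ x : Fin p, F x k i * D b x a
          = -∑ x : Fin p, D b x a * F x i k := by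
        rw [← Finset.sum_neg_distrib]
        exact Finset.sum_congr rfl fun x _ => by rw [hF x k i]; ring
      simp only [mul_neg, neg_mul, neg_neg, Finset.sum_neg_distrib]
      linarith [h, e1, e2]
    · rename_i j c
      have h := hIII j i c a
      rw [Finset.sum_sub_distrib] at h
      have e3 : ∑ m : Fin p, E m c a * F j m i = ∑ m : Fin p, F j i m * E m a c :=
        Finset.sum_congr rfl fun m _ => by rw [hE m c a, hF j m i]; ring
      have e4 : ∑ x : Fin n, D x i a * E j x c
          = ∑ x : Fin n, -(E j c x * D x i a) :=
        Finset.sum_congr rfl fun x _ => by rw [hE j x c]; ring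
      simp only [Finset.sum_neg_distrib] at e4
      linarith [h, e3, e4]
  have part3 : ∀ i k, Cblock n p E D F (Sum.inr i) * Cblock n p E D F (Sum.inr k)
        - Cblock n p E D F (Sum.inr k) * Cblock n p E D F (Sum.inr i)
      = ∑ j, F j i k • Cblock n p E D F (Sum.inr j) := by
    intro i k
    ext A B
    cases A <;> cases B <;>
      simp only [Cblock, Matrix.sub_apply, Matrix.mul_apply, Matrix.sum_apply,
        Matrix.smul_apply, smul_eq_mul, Fintype.sum_sum_type,
        Matrix.fromBlocks_apply₁₁, Matrix.fromBlocks_apply₁₂,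
        Matrix.fromBlocks_apply₂₁, Matrix.fromBlocks_apply₂₂,
        Matrix.of_apply, Matrix.zero_apply, zero_mul, mul_zero,
        Finset.sum_const_zero, add_zero, zero_add, sub_zero, zero_sub, sub_self]
    · rename_i b c
      exact hDD i k b c
    · rename_i j l
      exact hFF i k j l
  refine ⟨part1, part2, part3, ?_⟩
  intro A B
  cases A with
  | inl a =>
    cases B with
    | inl b =>
      rw [Fintype.sum_sum_type]
      simp only [structConst, zero_smul, Finset.sum_const_zero, zero_add, add_zero]
      exact part1 a b
    | inr i =>
      have h := part2 i a
      rw [Fintype.sum_sum_type]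
      simp only [structConst, zero_smul, Finset.sum_const_zero, zero_add, add_zero, neg_smul]
      rw [← neg_sub, h, ← Finset.sum_neg_distrib]
  | inr i =>
    cases B with
    | inl a =>
      rw [Fintype.sum_sum_type]
      simp only [structConst, zero_smul, Finset.sum_const_zero, zero_add, add_zero]
      exact part2 i a
    | inr k =>
      rw [Fintype.sum_sum_type]
      simp only [structConst, zero_smul, Finset.sum_const_zero, zero_add, add_zero]
      exact part3 i k
end

section
/- The scalar curvature R_G = −(1/4) ∑ γ^{AB} C^C_{AD} C^D_{BC} of the isometry group metric γ = diag(g, β) satisfies R_G = (3/4) R + R_H, where R = ∑ g^{ac} g^{bd} β_{ik} E^i_{ab} E^k_{cd} is the scalar curvature of the symmetric space and R_H = −(1/4) ∑ β^{ik} F^m_{il} F^l_{km} is the scalar curvature of the holonomy group. -/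
open Matrix

lemma sum6_prod {α₁ α₂ α₃ α₄ α₅ α₆ : Type*} [Fintype α₁] [Fintype α₂] [Fintype α₃]
    [Fintype α₄] [Fintype α₅] [Fintype α₆]
    (f : α₁ → α₂ → α₃ → α₄ → α₅ → α₆ → ℝ) :
    ∑ x : α₁ × α₂ × α₃ × α₄ × α₅ × α₆,
      f x.1 x.2.1 x.2.2.1 x.2.2.2.1 x.2.2.2.2.1 x.2.2.2.2.2
    = ∑ a, ∑ b, ∑ c, ∑ d, ∑ e, ∑ g, f a b c d e g := by
  simp [Fintype.sum_prod_type]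

lemma sum8_prod {α₁ α₂ α₃ α₄ α₅ α₆ α₇ α₈ : Type*} [Fintype α₁] [Fintype α₂] [Fintype α₃]
    [Fintype α₄] [Fintype α₅] [Fintype α₆] [Fintype α₇] [Fintype α₈]
    (f : α₁ → α₂ → α₃ → α₄ → α₅ → α₆ → α₇ → α₈ → ℝ) :
    ∑ x : α₁ × α₂ × α₃ × α₄ × α₅ × α₆ × α₇ × α₈,
      f x.1 x.2.1 x.2.2.1 x.2.2.2.1 x.2.2.2.2.1 x.2.2.2.2.2.1 x.2.2.2.2.2.2.1
        x.2.2.2.2.2.2.2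
    = ∑ a, ∑ b, ∑ c, ∑ d, ∑ e, ∑ g, ∑ h, ∑ i, f a b c d e g h i := by
  simp [Fintype.sum_prod_type]

/-- The scalar curvature `R_G = -(1/4) ∑ γ^{AB} C^C_{AD} C^D_{BC}` of the bi-invariant metric
`γ = diag(g, β)` on the isometry group satisfies `R_G = (3/4) R + R_H`, where
`R = ∑ g^{ac} g^{bd} β_{ik} E^i_{ab} E^k_{cd}` is the scalar curvature of the symmetric space
and `R_H = -(1/4) ∑ β^{ik} F^m_{il} F^l_{km}` is the scalar curvature of the holonomy group. -/
theorem statement3 (n p : ℕ) (hn : 1 ≤ n) (hp : 1 ≤ p)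
    (g : Matrix (Fin n) (Fin n) ℝ) (hg : g.PosDef)
    (β : Matrix (Fin p) (Fin p) ℝ) (hβ : β.PosDef)
    (E : Fin p → Fin n → Fin n → ℝ)
    (hE : ∀ i a b, E i a b = - E i b a)
    (D : Fin n → Fin p → Fin n → ℝ)
    (hD : ∀ a i b, D a i b = - ∑ k, ∑ c, β i k * E k c b * g⁻¹ c a)
    (F : Fin p → Fin p → Fin p → ℝ)
    (γ : Matrix (Fin n ⊕ Fin p) (Fin n ⊕ Fin p) ℝ)
    (hγ : γ = Matrix.fromBlocks g 0 0 β)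
    (RG R RH : ℝ)
    (hRG : RG = -(1/4) * ∑ A, ∑ B, ∑ C, ∑ Dd, γ⁻¹ A B *
      structConst n p E D F C A Dd * structConst n p E D F Dd B C)
    (hR : R = ∑ a, ∑ c, ∑ b, ∑ d, ∑ i, ∑ k, g⁻¹ a c * g⁻¹ b d * β i k * E i a b * E k c d)
    (hRH : RH = -(1/4) * ∑ i, ∑ k, ∑ m, ∑ l, β⁻¹ i k * F m i l * F l k m) :
    RG = (3/4) * R + RH := by
  -- symmetry facts
  have hgs : ∀ a b, g⁻¹ a b = g⁻¹ b a := fun a b => by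
    simpa using ((hg.isHermitian.inv).apply a b).symm
  have hβs : ∀ i k, β i k = β k i := fun i k => by
    simpa using (hβ.isHermitian.apply i k).symm
  have hβis : ∀ i k, β⁻¹ i k = β⁻¹ k i := fun i k => by
    simpa using ((hβ.isHermitian.inv).apply i k).symm
  have hβinv : β⁻¹ * β = 1 := Matrix.nonsing_inv_mul β (isUnit_iff_ne_zero.mpr hβ.det_pos.ne')
  -- inverse of the block metric
  have hγi : γ⁻¹ = Matrix.fromBlocks g⁻¹ 0 0 β⁻¹ := by
    rw [hγ]
    apply inv_eq_right_inv
    rw [Matrix.fromBlocks_multiply,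
      Matrix.mul_nonsing_inv _ (isUnit_iff_ne_zero.mpr hg.det_pos.ne'),
      Matrix.mul_nonsing_inv _ (isUnit_iff_ne_zero.mpr hβ.det_pos.ne')]
    simp [Matrix.fromBlocks_one]
  rw [hγi] at hRG
  -- expand the sum over the Sum type
  have expand : (∑ A, ∑ B, ∑ C, ∑ Dd,
      (Matrix.fromBlocks g⁻¹ 0 0 β⁻¹ : Matrix (Fin n ⊕ Fin p) (Fin n ⊕ Fin p) ℝ) A B *
      structConst n p E D F C A Dd * structConst n p E D F Dd B C) =
      (∑ a, ∑ b, ∑ i, ∑ d, g⁻¹ a b * E i a d * (-(D d i b)))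
      + (∑ a, ∑ b, ∑ c, ∑ k, g⁻¹ a b * (-(D c k a)) * E k b c)
      + (∑ i, ∑ k, ∑ c, ∑ d, β⁻¹ i k * D c i d * D d k c)
      + (∑ i, ∑ k, ∑ m, ∑ l, β⁻¹ i k * F m i l * F l k m) := by
    simp only [Fintype.sum_sum_type, structConst, Matrix.fromBlocks_apply₁₁,
      Matrix.fromBlocks_apply₁₂, Matrix.fromBlocks_apply₂₁, Matrix.fromBlocks_apply₂₂,
      Matrix.zero_apply, zero_mul, mul_zero, neg_mul, mul_neg, neg_neg,
      Finset.sum_add_distrib, Finset.sum_const_zero, add_zero, zero_add,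
      Finset.sum_neg_distrib]
    ring
  rw [expand] at hRG
  -- neg-distribution helper
  have negdist : ∀ (f : Fin n → Fin n → Fin n → Fin n → Fin p → Fin p → ℝ),
      (- ∑ a, ∑ c, ∑ b, ∑ d, ∑ i, ∑ k, f a c b d i k)
      = ∑ a, ∑ c, ∑ b, ∑ d, ∑ i, ∑ k, -f a c b d i k := by
    intro f; simp [Finset.sum_neg_distrib]
  -- collapse ∑ β⁻¹ β
  have hcol : ∀ (k : Fin p) (X : Fin p → ℝ), (∑ i, ∑ m, β⁻¹ i k * β i m * X m) = X k := by
    intro k X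
    rw [Finset.sum_comm]
    have h1 : ∀ m, ∑ i, β⁻¹ i k * β i m * X m = (β⁻¹ * β) k m * X m := by
      intro m
      rw [Matrix.mul_apply, Finset.sum_mul]
      refine Finset.sum_congr rfl fun i _ => by rw [hβis i k]
    simp only [h1, hβinv, Matrix.one_apply]
    simp [Finset.sum_ite_eq]
  set Rs := ∑ a, ∑ c, ∑ b, ∑ d, ∑ i, ∑ k,
    g⁻¹ a c * g⁻¹ b d * β i k * E i a b * E k c d with hRs
  -- first term
  have h1 : (∑ a, ∑ b, ∑ i, ∑ d, g⁻¹ a b * E i a d * (-(D d i b))) = -Rs := by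
    have e1 : ∀ (a b : Fin n) (i : Fin p) (d : Fin n),
        g⁻¹ a b * E i a d * (-(D d i b))
        = ∑ k, ∑ c, g⁻¹ a b * E i a d * (β i k * E k c b * g⁻¹ c d) := by
      intro a b i d
      simp only [hD, neg_neg, Finset.mul_sum]
    simp only [e1]
    rw [hRs, negdist, ← sum6_prod, ← sum6_prod]
    apply Fintype.sum_equiv
      (⟨fun x => (x.1, x.2.1, x.2.2.2.1, x.2.2.2.2.2, x.2.2.1, x.2.2.2.2.1),
        fun y => (y.1, y.2.1, y.2.2.2.2.1, y.2.2.1, y.2.2.2.2.2, y.2.2.2.1),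
        fun x => rfl, fun y => rfl⟩)
    rintro ⟨a, b, i, d, k, c⟩
    simp only [Equiv.coe_fn_mk]
    rw [hE k c b, hgs c d]
    ring
  -- second term
  have h2 : (∑ a, ∑ b, ∑ c, ∑ k, g⁻¹ a b * (-(D c k a)) * E k b c) = -Rs := by
    have e2 : ∀ (a b c : Fin n) (k : Fin p),
        g⁻¹ a b * (-(D c k a)) * E k b c
        = ∑ m, ∑ e, g⁻¹ a b * (β k m * E m e a * g⁻¹ e c) * E k b c := by
      intro a b c k
      simp only [hD, neg_neg, Finset.mul_sum, Finset.sum_mul]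
    simp only [e2]
    rw [hRs, negdist, ← sum6_prod, ← sum6_prod]
    apply Fintype.sum_equiv
      (⟨fun x => (x.1, x.2.1, x.2.2.2.2.2, x.2.2.1, x.2.2.2.2.1, x.2.2.2.1),
        fun y => (y.1, y.2.1, y.2.2.2.1, y.2.2.2.2.2, y.2.2.2.2.1, y.2.2.1),
        fun x => rfl, fun y => rfl⟩)
    rintro ⟨a, b, c, k, m, e⟩
    simp only [Equiv.coe_fn_mk]
    rw [hE m e a, hβs k m]
    ring
  -- third term
  have h3 : (∑ i, ∑ k, ∑ c, ∑ d, β⁻¹ i k * D c i d * D d k c) = -Rs := by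
    have hDD : ∀ (i k : Fin p) (c d : Fin n),
        β⁻¹ i k * D c i d * D d k c
        = ∑ l, ∑ f, ∑ m, ∑ e, β⁻¹ i k * β i m *
            (E m e d * g⁻¹ e c * β k l * E l f c * g⁻¹ f d) := by
      intro i k c d
      rw [hD c i d, hD d k c]
      simp only [mul_neg, neg_mul, neg_neg, Finset.mul_sum, Finset.sum_mul,
        Finset.sum_neg_distrib]
      refine Finset.sum_congr rfl fun l _ => Finset.sum_congr rfl fun f _ =>
        Finset.sum_congr rfl fun m _ => Finset.sum_congr rfl fun e _ => by ring
    have step1 : (∑ i, ∑ k, ∑ c, ∑ d, β⁻¹ i k * D c i d * D d k c)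
        = ∑ k, ∑ c, ∑ d, ∑ e, ∑ l, ∑ f,
            β k l * E k e d * g⁻¹ e c * E l f c * g⁻¹ f d := by
      simp only [hDD]
      have rhs8 : (∑ k, ∑ c, ∑ d, ∑ e, ∑ l, ∑ f,
            β k l * E k e d * g⁻¹ e c * E l f c * g⁻¹ f d)
          = ∑ k, ∑ c, ∑ d, ∑ e, ∑ l, ∑ f, ∑ i, ∑ m, β⁻¹ i k * β i m *
              (E m e d * g⁻¹ e c * β k l * E l f c * g⁻¹ f d) := by
        refine Finset.sum_congr rfl fun k _ => Finset.sum_congr rfl fun c _ =>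
          Finset.sum_congr rfl fun d _ => Finset.sum_congr rfl fun e _ =>
          Finset.sum_congr rfl fun l _ => Finset.sum_congr rfl fun f _ => ?_
        rw [hcol k (fun m => E m e d * g⁻¹ e c * β k l * E l f c * g⁻¹ f d)]
        ring
      rw [rhs8, ← sum8_prod, ← sum8_prod]
      apply Fintype.sum_equiv
        (⟨fun x => (x.2.1, x.2.2.1, x.2.2.2.1, x.2.2.2.2.2.2.2, x.2.2.2.2.1,
            x.2.2.2.2.2.1, x.1, x.2.2.2.2.2.2.1),
          fun y => (y.2.2.2.2.2.2.1, y.1, y.2.1, y.2.2.1, y.2.2.2.2.1, y.2.2.2.2.2.1,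
            y.2.2.2.2.2.2.2, y.2.2.2.1),
          fun x => rfl, fun y => rfl⟩)
      rintro ⟨i, k, c, d, l, f, m, e⟩
      simp only [Equiv.coe_fn_mk]
    rw [step1, hRs, negdist, ← sum6_prod, ← sum6_prod]
    apply Fintype.sum_equiv
      (⟨fun x => (x.2.2.2.1, x.2.1, x.2.2.1, x.2.2.2.2.2, x.1, x.2.2.2.2.1),
        fun y => (y.2.2.2.2.1, y.2.1, y.2.2.1, y.1, y.2.2.2.2.2, y.2.2.2.1),
        fun x => rfl, fun y => rfl⟩)
    rintro ⟨k, c, d, e, l, f⟩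
    simp only [Equiv.coe_fn_mk]
    rw [hE l f c, hgs f d]
    ring
  rw [h1, h2, h3] at hRG
  rw [hRG, hR, hRH]
  ring
end
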